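/- arXiv:1701.00162 — 2 statements merged into one kernel-verified Lean document; each statement's English description precedes it below -/
import Mathlib

section
/- Let ε > 0, α > 0, i ∈ {1,2}, k ∈ {1,2}, p ∈ {1,2}. With D_ε(u,v) = (1/2) ∫_{ℝ²} (u(x) − v(x))² / ((∂₁v(x))² + ε) dx, R(u) = (1/p) ∫_{ℝ²} |∂_i^k u(x)|^p dx, and F_ε(u; v) = D_ε(u,v) + α R(u), suppose (u_m)_{m≥0} is a sequence of differentiable functions with u_0 = u^δ such that for each m ≥ 1, u_m minimizes F_ε(·; u_{m−1}) (i.e., F_ε(u_m; u_{m−1}) ≤ F_ε(w; u_{m−1}) for all admissible w), and all the occurring integrals are finite. Then the sequence (R(u_m))_{m≥0} is nonnegative and monotonically decreasing: for all m ≥ 0, 0 ≤ R(u_{m+1}) ≤ R(u_m). -/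
open MeasureTheory Filter

/-- `∂₁ v`: the partial derivative of `v` in the first coordinate direction. -/
noncomputable def pd1 (v : ℝ × ℝ → ℝ) (x : ℝ × ℝ) : ℝ :=
  deriv (fun t => v (x.1 + t, x.2)) 0

/-- The `i`-th standard basis vector of `ℝ²` (for `i = 1` or `i = 2`). -/
def eVec (i : ℕ) : ℝ × ℝ := if i = 1 then (1, 0) else (0, 1)

/-- `∂ᵢᵏ u`: the `k`-th partial derivative of `u` in the `i`-th coordinate
direction, i.e. the `k`-th derivative of `t ↦ u (x + t eᵢ)` at `t = 0`. -/
noncomputable def pdik (i k : ℕ) (u : ℝ × ℝ → ℝ) (x : ℝ × ℝ) : ℝ :=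
  iteratedDeriv k (fun t : ℝ => u (x + t • eVec i)) 0

/-- The data term `D_ε(u, v) = (1/2) ∫ (u - v)² / ((∂₁ v)² + ε)`. -/
noncomputable def dataTerm (ε : ℝ) (u v : ℝ × ℝ → ℝ) : ℝ :=
  (1 / 2) * ∫ x : ℝ × ℝ, (u x - v x) ^ 2 / ((pd1 v x) ^ 2 + ε)

/-- The regularizer `R(u) = (1/p) ∫ |∂ᵢᵏ u|^p`. -/
noncomputable def regTerm (i k p : ℕ) (u : ℝ × ℝ → ℝ) : ℝ :=
  (1 / (p : ℝ)) * ∫ x : ℝ × ℝ, |pdik i k u x| ^ p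

/-- The functional `F_ε(u; v) = D_ε(u, v) + α R(u)`. -/
noncomputable def Feps (ε α : ℝ) (i k p : ℕ) (u v : ℝ × ℝ → ℝ) : ℝ :=
  dataTerm ε u v + α * regTerm i k p u

/-- For the iteration `u_m := argmin F_ε(·; u_{m-1})` starting from
`u_0 = u^δ`, the sequence `(R(u_m))_{m ≥ 0}` is nonnegative and monotonically
decreasing. -/
theorem regTerm_sequence_nonneg_and_monotone
    (ε α : ℝ) (hε : 0 < ε) (hα : 0 < α)
    (i k p : ℕ) (hi : i = 1 ∨ i = 2) (hk : k = 1 ∨ k = 2) (hp : p = 1 ∨ p = 2)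
    (A : Set (ℝ × ℝ → ℝ)) (uδ : ℝ × ℝ → ℝ) (u : ℕ → ℝ × ℝ → ℝ)
    (h0 : u 0 = uδ)
    (hdiff : ∀ m, Differentiable ℝ (u m))
    (hmem : ∀ m, u m ∈ A)
    (hintD : ∀ m, Integrable
      (fun x : ℝ × ℝ => (u (m + 1) x - u m x) ^ 2 / ((pd1 (u m) x) ^ 2 + ε)))
    (hintR : ∀ m, Integrable (fun x : ℝ × ℝ => |pdik i k (u m) x| ^ p))
    (hmin : ∀ m, 1 ≤ m → ∀ w ∈ A,
      Feps ε α i k p (u m) (u (m - 1)) ≤ Feps ε α i k p w (u (m - 1))) :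
    ∀ m : ℕ, 0 ≤ regTerm i k p (u (m + 1)) ∧
      regTerm i k p (u (m + 1)) ≤ regTerm i k p (u m) := by
  have hRnn : ∀ m, 0 ≤ regTerm i k p (u m) := by
    intro m
    unfold regTerm
    apply mul_nonneg (by positivity)
    exact integral_nonneg fun x => by positivity
  intro m
  refine ⟨hRnn (m + 1), ?_⟩
  have hmin' := hmin (m + 1) (Nat.le_add_left 1 m) (u m) (hmem m)
  simp only [Nat.add_sub_cancel] at hmin'
  have hDnn : 0 ≤ dataTerm ε (u (m + 1)) (u m) := by
    unfold dataTerm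
    apply mul_nonneg (by norm_num)
    refine integral_nonneg fun x => ?_
    have : 0 < (pd1 (u m) x) ^ 2 + ε := by positivity
    positivity
  have hD0 : dataTerm ε (u m) (u m) = 0 := by
    unfold dataTerm
    simp
  unfold Feps at hmin'
  rw [hD0] at hmin'
  have : α * regTerm i k p (u (m + 1)) ≤ α * regTerm i k p (u m) := by linarith
  exact le_of_mul_le_mul_left this hα
end

section
/- Let ε > 0, α > 0, i ∈ {1,2}, k ∈ {1,2}, p ∈ {1,2}. With D_ε(u,v) = (1/2) ∫_{ℝ²} (u(x) − v(x))² / ((∂₁v(x))² + ε) dx, R(u) = (1/p) ∫_{ℝ²} |∂_i^k u(x)|^p dx, and F_ε(u; v) = D_ε(u,v) + α R(u), suppose (u_m)_{m≥0} is a sequence of differentiable functions with u_0 = u^δ such that for each m ≥ 1, u_m minimizes F_ε(·; u_{m−1}) (i.e., F_ε(u_m; u_{m−1}) ≤ F_ε(w; u_{m−1}) for all admissible w), all occurring integrals are finite, and u_m − u_{m−1} ∈ L²(ℝ²) for all m ≥ 1. If there exists a constant C > 0 with sup_{m ≥ 0} ‖∂₁u_m‖_{L^∞(ℝ²)} = C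 < ∞, then ‖u_m − u_{m−1}‖_{L²(ℝ²)} → 0 as m → ∞. -/
/-! Testing the minimality of `u (m + 1)` against the competitor `u m` gives
`D_ε(u_{m+1}, u_m) + α R(u_{m+1}) ≤ α R(u_m)`, so the data terms telescope into a summable
sequence and tend to zero. Since `|∂₁ u_m| ≤ C` a.e., the weight `1 / ((∂₁ u_m)² + ε)` is at least
`1 / (C² + ε)`, whence `‖u_{m+1} - u_m‖²_{L²} ≤ 2 (C² + ε) D_ε(u_{m+1}, u_m) → 0`. -/

open MeasureTheory Filter

open scoped Topology ENNReal

theorem summable_of_add_succ_le {D R : ℕ → ℝ} (hD : ∀ m, 0 ≤ D m) (hR : ∀ m, 0 ≤ R m)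
    (h : ∀ m, D m + R (m + 1) ≤ R m) : Summable D := by
  refine summable_of_sum_range_le (c := R 0) hD fun N => ?_
  calc ∑ m ∈ Finset.range N, D m
      ≤ ∑ m ∈ Finset.range N, (R m - R (m + 1)) :=
        Finset.sum_le_sum fun m _ => le_sub_iff_add_le.mpr (h m)
    _ = R 0 - R N := Finset.sum_range_sub' R N
    _ ≤ R 0 := sub_le_self _ (hR N)

theorem ae_abs_le_of_eLpNorm_top_le {α : Type*} [MeasurableSpace α] {μ : Measure α}
    {f : α → ℝ} {C : ℝ} (hC : 0 ≤ C) (hf : eLpNorm f ∞ μ ≤ ENNReal.ofReal C) :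
    ∀ᵐ x ∂μ, |f x| ≤ C := by
  filter_upwards [enorm_ae_le_eLpNormEssSup f μ] with x hx
  rw [eLpNorm_exponent_top] at hf
  rw [← ENNReal.ofReal_le_ofReal_iff hC, ← Real.enorm_eq_ofReal_abs]
  exact hx.trans hf

theorem eLpNorm_two_le_sqrt_integral_div {α : Type*} [MeasurableSpace α] {μ : Measure α}
    {f g : α → ℝ} {ε C : ℝ} (hε : 0 < ε) (hg : ∀ᵐ x ∂μ, |g x| ≤ C)
    (hint : Integrable (fun x => f x ^ 2 / (g x ^ 2 + ε)) μ) :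
    eLpNorm f 2 μ ≤ ENNReal.ofReal √((C ^ 2 + ε) * ∫ x, f x ^ 2 / (g x ^ 2 + ε) ∂μ) := by
  have hpointwise : ∀ᵐ x ∂μ, ‖f x‖ₑ ^ (2 : ℝ) ≤
      ENNReal.ofReal ((C ^ 2 + ε) * (f x ^ 2 / (g x ^ 2 + ε))) := by
    filter_upwards [hg] with x hx
    have hgC : g x ^ 2 ≤ C ^ 2 := sq_le_sq' (abs_le.mp hx).1 (abs_le.mp hx).2
    rw [Real.enorm_eq_ofReal_abs, ENNReal.ofReal_rpow_of_nonneg (abs_nonneg _) two_pos.le,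
      Real.rpow_two, sq_abs]
    refine ENNReal.ofReal_le_ofReal ?_
    rw [mul_div_assoc', le_div_iff₀ (by positivity), mul_comm]
    exact mul_le_mul_of_nonneg_right (by linarith) (sq_nonneg _)
  have hlintegral : ∫⁻ x, ‖f x‖ₑ ^ (2 : ℝ) ∂μ ≤
      ENNReal.ofReal ((C ^ 2 + ε) * ∫ x, f x ^ 2 / (g x ^ 2 + ε) ∂μ) := by
    rw [← integral_const_mul, ofReal_integral_eq_lintegral_ofReal (hint.const_mul _)]
    · exact lintegral_mono_ae hpointwise
    · exact Eventually.of_forall fun x => by positivity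
  rw [show (2 : ℝ≥0∞) = ((2 : NNReal) : ℝ≥0∞) from rfl, eLpNorm_nnreal_eq_lintegral two_ne_zero,
    Real.sqrt_eq_rpow, ← ENNReal.ofReal_rpow_of_nonneg (by positivity) (by norm_num)]
  push_cast
  exact ENNReal.rpow_le_rpow hlintegral (by norm_num)

theorem dataTerm_self (ε : ℝ) (v : ℝ × ℝ → ℝ) : dataTerm ε v v = 0 := by
  simp [dataTerm]

theorem dataTerm_nonneg {ε : ℝ} (hε : 0 ≤ ε) (u v : ℝ × ℝ → ℝ) : 0 ≤ dataTerm ε u v :=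
  mul_nonneg one_half_pos.le (integral_nonneg fun _ => by positivity)

theorem regTerm_nonneg (i k p : ℕ) (u : ℝ × ℝ → ℝ) : 0 ≤ regTerm i k p u :=
  mul_nonneg (by positivity) (integral_nonneg fun _ => by positivity)

theorem Feps_self (ε α : ℝ) (i k p : ℕ) (v : ℝ × ℝ → ℝ) :
    Feps ε α i k p v v = α * regTerm i k p v := by
  simp [Feps, dataTerm_self]

theorem eLpNorm_sub_le_sqrt_dataTerm {ε C : ℝ} (hε : 0 < ε) {u v : ℝ × ℝ → ℝ}
    (hv : ∀ᵐ x, |pd1 v x| ≤ C)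
    (hint : Integrable (fun x => (u x - v x) ^ 2 / (pd1 v x ^ 2 + ε))) :
    eLpNorm (fun x => u x - v x) 2 volume ≤
      ENNReal.ofReal √(2 * (C ^ 2 + ε) * dataTerm ε u v) := by
  convert eLpNorm_two_le_sqrt_integral_div hε hv hint using 3
  unfold dataTerm
  ring

theorem consecutive_differences_tend_to_zero_general
    (ε α : ℝ) (hε : 0 < ε) (hα : 0 < α)
    (i k p : ℕ)
    (A : Set (ℝ × ℝ → ℝ)) (u : ℕ → ℝ × ℝ → ℝ)
    (hmem : ∀ m, u m ∈ A)
    (hintD : ∀ m, Integrable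
      (fun x : ℝ × ℝ => (u (m + 1) x - u m x) ^ 2 / ((pd1 (u m) x) ^ 2 + ε)))
    (hmin : ∀ m, 1 ≤ m → ∀ w ∈ A,
      Feps ε α i k p (u m) (u (m - 1)) ≤ Feps ε α i k p w (u (m - 1)))
    (C : ℝ) (hC : 0 < C)
    (hsup : (⨆ m : ℕ, eLpNorm (fun x : ℝ × ℝ => pd1 (u m) x) ⊤ volume)
      = ENNReal.ofReal C) :
    Filter.Tendsto
      (fun m : ℕ => eLpNorm (fun x : ℝ × ℝ => u (m + 1) x - u m x) 2 volume)
      Filter.atTop (nhds 0) := by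
  set D : ℕ → ℝ := fun m => dataTerm ε (u (m + 1)) (u m)
  have hdecay : ∀ m, D m + α * regTerm i k p (u (m + 1)) ≤ α * regTerm i k p (u m) := fun m => by
    have hm := hmin (m + 1) (Nat.le_add_left 1 m) (u m) (hmem m)
    rwa [Nat.add_sub_cancel, Feps_self] at hm
  have hD : Tendsto D atTop (𝓝 0) :=
    (summable_of_add_succ_le (fun _ => dataTerm_nonneg hε.le _ _)
      (fun _ => mul_nonneg hα.le (regTerm_nonneg _ _ _ _)) hdecay).tendsto_atTop_zero
  have hbound : ∀ m, ∀ᵐ x, |pd1 (u m) x| ≤ C := fun m =>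
    ae_abs_le_of_eLpNorm_top_le hC.le (hsup ▸ le_iSup (fun m => eLpNorm (pd1 (u m)) ⊤ volume) m)
  have hmajorant : Tendsto (fun m => ENNReal.ofReal √(2 * (C ^ 2 + ε) * D m)) atTop (𝓝 0) := by
    simpa using ENNReal.tendsto_ofReal ((hD.const_mul (2 * (C ^ 2 + ε))).sqrt)
  exact tendsto_of_tendsto_of_tendsto_of_le_of_le tendsto_const_nhds hmajorant
    (fun _ => zero_le) fun m => eLpNorm_sub_le_sqrt_dataTerm hε (hbound m) (hintD m)

/-- If the partial derivatives `∂₁ u_m` are uniformly essentially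
bounded (with supremum `C > 0`), then for the iteration `u_m := argmin F_ε(·; u_{m-1})`
one has `‖u_m − u_{m−1}‖_{L²} → 0` as `m → ∞`. -/
theorem consecutive_differences_tend_to_zero
    (ε α : ℝ) (hε : 0 < ε) (hα : 0 < α)
    (i k p : ℕ) (hi : i = 1 ∨ i = 2) (hk : k = 1 ∨ k = 2) (hp : p = 1 ∨ p = 2)
    (A : Set (ℝ × ℝ → ℝ)) (uδ : ℝ × ℝ → ℝ) (u : ℕ → ℝ × ℝ → ℝ)
    (h0 : u 0 = uδ)
    (hdiff : ∀ m, Differentiable ℝ (u m))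
    (hmem : ∀ m, u m ∈ A)
    (hintD : ∀ m, Integrable
      (fun x : ℝ × ℝ => (u (m + 1) x - u m x) ^ 2 / ((pd1 (u m) x) ^ 2 + ε)))
    (hintR : ∀ m, Integrable (fun x : ℝ × ℝ => |pdik i k (u m) x| ^ p))
    (hmin : ∀ m, 1 ≤ m → ∀ w ∈ A,
      Feps ε α i k p (u m) (u (m - 1)) ≤ Feps ε α i k p w (u (m - 1)))
    (hL2 : ∀ m, MemLp (fun x : ℝ × ℝ => u (m + 1) x - u m x) 2 volume)
    (C : ℝ) (hC : 0 < C)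
    (hsup : (⨆ m : ℕ, eLpNorm (fun x : ℝ × ℝ => pd1 (u m) x) ⊤ volume)
      = ENNReal.ofReal C) :
    Filter.Tendsto
      (fun m : ℕ => eLpNorm (fun x : ℝ × ℝ => u (m + 1) x - u m x) 2 volume)
      Filter.atTop (nhds 0) :=
  consecutive_differences_tend_to_zero_general ε α hε hα i k p A u hmem hintD hmin C hC hsup
end
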